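/- arXiv:1809.05393 — 3 statements merged into one kernel-verified Lean document; each statement's English description precedes it below -/
import Mathlib

section
/- (Hoffman–Wielandt inequality) For Hermitian matrices $A, B \in M_n(\mathbb{C})$ with eigenvalues $\lambda_1^A \le \cdots \le \lambda_n^A$ and $\lambda_1^B \le \cdots \le \lambda_n^B$ respectively, one has $\sum_{i=1}^n |\lambda_i^A - \lambda_i^B|^2 \le \|A - B\|_{HS}^2$, where $\|M\|_{HS} = \sqrt{\operatorname{tr}(M M^*)}$. -/
/-!
Diagonalize `A = U D_A U*` and `B = V D_B V*`. Then `Re tr(AB) = ∑ᵢⱼ λᵢ^A λⱼ^B |Wᵢⱼ|²` with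
`W = U*V`, and since `W` is unitary the matrix `(|Wᵢⱼ|²)` is doubly stochastic. A linear
functional on the Birkhoff polytope is maximized at a permutation matrix, and by the rearrangement
inequality the best permutation pairs the eigenvalues in the same order, so
`Re tr(AB) ≤ ∑ᵢ λᵢ^A λᵢ^B` for the sorted eigenvalues. Expanding
`‖A - B‖²_HS = tr A² + tr B² - 2 Re tr(AB)` gives the inequality.
-/

open Matrix Finset

theorem dotProduct_mulVec_le_of_mem_doublyStochastic {ι R : Type*} [Fintype ι] [DecidableEq ι]
    [Field R] [LinearOrder R] [IsStrictOrderedRing R] {f g : ι → R} {c : R}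
    (h : ∀ σ : Equiv.Perm ι, ∑ i, f i * g (σ i) ≤ c) {M : Matrix ι ι R}
    (hM : M ∈ doublyStochastic R ι) : f ⬝ᵥ M *ᵥ g ≤ c := by
  have hconv : Convex R {M : Matrix ι ι R | f ⬝ᵥ M *ᵥ g ≤ c} :=
    convex_halfSpace_le ⟨fun M N => by simp [add_mulVec, dotProduct_add],
      fun r M => by simp [smul_mulVec, dotProduct_smul]⟩ c
  rw [← SetLike.mem_coe, doublyStochastic_eq_convexHull_permMatrix] at hM
  refine convexHull_min ?_ hconv hM
  rintro _ ⟨σ, rfl⟩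
  simpa [permMatrix_mulVec, dotProduct] using h σ

theorem Monovary.sum_mul_comp_perm_le_sum_comp_mul_comp {ι R : Type*} [Fintype ι] [Semiring R]
    [LinearOrder R] [IsStrictOrderedRing R] [ExistsAddOfLE R] {f g : ι → R} {σ τ : Equiv.Perm ι}
    (hfg : Monovary (f ∘ σ) (g ∘ τ)) (π : Equiv.Perm ι) :
    ∑ i, f i * g (π i) ≤ ∑ i, f (σ i) * g (τ i) :=
  calc ∑ i, f i * g (π i) = ∑ i, (f ∘ σ) i * (g ∘ τ) ((τ.symm * π * σ) i) := by
        rw [← Equiv.sum_comp σ]; simp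
    _ ≤ _ := hfg.sum_mul_comp_perm_le_sum_mul

namespace Matrix

variable {ι 𝕜 : Type*} [Fintype ι] [RCLike 𝕜]

theorem IsHermitian.re_trace_sub_mul_conjTranspose_sub {A B : Matrix ι ι 𝕜}
    (hA : A.IsHermitian) (hB : B.IsHermitian) :
    RCLike.re ((A - B) * (A - B)ᴴ).trace
      = RCLike.re (A * A).trace + RCLike.re (B * B).trace - 2 * RCLike.re (A * B).trace := by
  rw [(hA.sub hB).eq, sub_mul, mul_sub, mul_sub, trace_sub, trace_sub, trace_sub,
    trace_mul_comm B A, map_sub, map_sub, map_sub]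
  ring

variable [DecidableEq ι]

theorem sum_norm_sq_row_of_mem_unitaryGroup {U : Matrix ι ι 𝕜} (hU : U ∈ unitaryGroup ι 𝕜)
    (i : ι) : ∑ j, ‖U i j‖ ^ 2 = 1 := by
  have h := congr_fun (congr_fun (mem_unitaryGroup_iff.mp hU) i) i
  simp only [mul_apply, star_apply, RCLike.star_def, RCLike.mul_conj, one_apply_eq] at h
  exact_mod_cast h

theorem of_norm_sq_mem_doublyStochastic {U : Matrix ι ι 𝕜} (hU : U ∈ unitaryGroup ι 𝕜) :
    of (fun i j => ‖U i j‖ ^ 2) ∈ doublyStochastic ℝ ι := by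
  refine mem_doublyStochastic_iff_sum.2
    ⟨fun i j => sq_nonneg ‖U i j‖, sum_norm_sq_row_of_mem_unitaryGroup hU, fun j => ?_⟩
  simpa [star_apply] using sum_norm_sq_row_of_mem_unitaryGroup (Unitary.star_mem hU) j

theorem re_trace_diagonal_mul_mul_diagonal_mul_conjTranspose (a b : ι → ℝ) (W : Matrix ι ι 𝕜) :
    RCLike.re (diagonal (RCLike.ofReal ∘ a) * W * diagonal (RCLike.ofReal ∘ b) * Wᴴ).trace
      = a ⬝ᵥ of (fun i j => ‖W i j‖ ^ 2) *ᵥ b := by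
  have hDWE : diagonal (RCLike.ofReal ∘ a) * W * diagonal (RCLike.ofReal ∘ b)
      = of fun i j => (a i : 𝕜) * W i j * b j := by
    ext i j
    simp [mul_diagonal, diagonal_mul]
  rw [hDWE]
  simp only [trace, diag_apply, mul_apply, of_apply, conjTranspose_apply, map_sum, dotProduct,
    mulVec, mul_sum]
  refine sum_congr rfl fun i _ => sum_congr rfl fun j _ => ?_
  rw [mul_right_comm _ (b j : 𝕜), mul_assoc _ (W i j), RCLike.star_def, RCLike.mul_conj]
  norm_cast
  ring

namespace IsHermitian

variable {A B : Matrix ι ι 𝕜}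

theorem re_trace_mul_eq_dotProduct_mulVec (hA : A.IsHermitian) (hB : B.IsHermitian) :
    RCLike.re (A * B).trace = hA.eigenvalues ⬝ᵥ
      of (fun i j => ‖(star (hA.eigenvectorUnitary : Matrix ι ι 𝕜) *
        hB.eigenvectorUnitary) i j‖ ^ 2) *ᵥ hB.eigenvalues := by
  set U : Matrix ι ι 𝕜 := ↑hA.eigenvectorUnitary
  set V : Matrix ι ι 𝕜 := ↑hB.eigenvectorUnitary
  set D : Matrix ι ι 𝕜 := diagonal (RCLike.ofReal ∘ hA.eigenvalues)
  set E : Matrix ι ι 𝕜 := diagonal (RCLike.ofReal ∘ hB.eigenvalues)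
  have htrace : (A * B).trace = (D * (star U * V) * E * (star U * V)ᴴ).trace := by
    conv_lhs => rw [hA.spectral_theorem, hB.spectral_theorem]
    simp only [Unitary.conjStarAlgAut_apply]
    rw [show U * D * star U * (V * E * star V) = U * (D * star U * V * E * star V) by
      simp only [Matrix.mul_assoc], trace_mul_comm]
    simp only [← star_eq_conjTranspose, star_mul, star_star, Matrix.mul_assoc]
  rw [htrace, re_trace_diagonal_mul_mul_diagonal_mul_conjTranspose]

theorem re_trace_mul_self (hA : A.IsHermitian) :
    RCLike.re (A * A).trace = ∑ i, hA.eigenvalues i ^ 2 := by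
  have hid : of (fun i j => ‖(1 : Matrix ι ι 𝕜) i j‖ ^ 2) = 1 := by
    ext i j
    by_cases h : i = j <;> simp [one_apply, h]
  rw [hA.re_trace_mul_eq_dotProduct_mulVec hA, Unitary.coe_star_mul_self, hid, one_mulVec]
  simp only [dotProduct, sq]

theorem re_trace_mul_le (hA : A.IsHermitian) (hB : B.IsHermitian) {σ τ : Equiv.Perm ι}
    (hmono : Monovary (hA.eigenvalues ∘ σ) (hB.eigenvalues ∘ τ)) :
    RCLike.re (A * B).trace ≤ ∑ i, hA.eigenvalues (σ i) * hB.eigenvalues (τ i) := by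
  rw [hA.re_trace_mul_eq_dotProduct_mulVec hB]
  exact dotProduct_mulVec_le_of_mem_doublyStochastic
    hmono.sum_mul_comp_perm_le_sum_comp_mul_comp (of_norm_sq_mem_doublyStochastic
      (mul_mem (Unitary.star_mem hA.eigenvectorUnitary.2) hB.eigenvectorUnitary.2))

end IsHermitian

end Matrix

theorem stmt1 {n : ℕ} (A B : Matrix (Fin n) (Fin n) ℂ)
    (hA : A.IsHermitian) (hB : B.IsHermitian)
    (lamA lamB : Fin n → ℝ) (hmA : Monotone lamA) (hmB : Monotone lamB)
    (hpA : ∃ σ : Equiv.Perm (Fin n), lamA = hA.eigenvalues ∘ σ)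
    (hpB : ∃ σ : Equiv.Perm (Fin n), lamB = hB.eigenvalues ∘ σ) :
    ∑ i : Fin n, |lamA i - lamB i| ^ 2 ≤ ((A - B) * (A - B)ᴴ).trace.re := by
  obtain ⟨σ, rfl⟩ := hpA
  obtain ⟨τ, rfl⟩ := hpB
  have hsqA : ∑ i, hA.eigenvalues (σ i) ^ 2 = ∑ i, hA.eigenvalues i ^ 2 :=
    Equiv.sum_comp σ (hA.eigenvalues · ^ 2)
  have hsqB : ∑ i, hB.eigenvalues (τ i) ^ 2 = ∑ i, hB.eigenvalues i ^ 2 :=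
    Equiv.sum_comp τ (hB.eigenvalues · ^ 2)
  calc ∑ i, |(hA.eigenvalues ∘ σ) i - (hB.eigenvalues ∘ τ) i| ^ 2
      = ∑ i, hA.eigenvalues (σ i) ^ 2 + ∑ i, hB.eigenvalues (τ i) ^ 2
          - 2 * ∑ i, hA.eigenvalues (σ i) * hB.eigenvalues (τ i) := by
        simp only [Function.comp_apply, sq_abs, sub_sq, sum_add_distrib, sum_sub_distrib, mul_sum,
          mul_assoc]
        ring
    _ ≤ RCLike.re ((A - B) * (A - B)ᴴ).trace := by
        rw [hA.re_trace_sub_mul_conjTranspose_sub hB, hsqA, hsqB, ← hA.re_trace_mul_self,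
          ← hB.re_trace_mul_self]
        linarith [hA.re_trace_mul_le hB (hmA.monovary hmB)]
end

section
/- Let $f : \mathbb{R} \to \mathbb{R}$ be a 1-Lipschitz function supported in $[-M, M]$, and let $\Delta > 0$. Then there exist an integer $\kappa \le 2\lceil 2M/\Delta \rceil$ and 1-Lipschitz functions $h_1, \ldots, h_\kappa : \mathbb{R} \to \mathbb{R}$, each of which is either convex or concave, such that $\sup_{x\in\mathbb{R}} |f(x) - \sum_{l=1}^\kappa h_l(x)| \le \Delta$. -/
open Finset

lemma sum_range_two_mul' (n : ℕ) (F : ℕ → ℝ) :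
    ∑ l ∈ Finset.range (2 * n), F l = ∑ j ∈ Finset.range n, (F (2*j) + F (2*j+1)) := by
  induction n with
  | zero => simp
  | succ n ih =>
    rw [show 2*(n+1) = 2*n+1+1 by ring, Finset.sum_range_succ, Finset.sum_range_succ, ih,
      Finset.sum_range_succ]
    ring

lemma lip_hinge (c a : ℝ) (hc : |c| ≤ 1) :
    LipschitzWith 1 (fun x : ℝ => c * max (x - a) 0) := by
  rw [lipschitzWith_iff_dist_le_mul]
  intro x y
  simp only [Real.dist_eq, NNReal.coe_one, one_mul]
  rw [← mul_sub, abs_mul]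
  calc |c| * |max (x-a) 0 - max (y-a) 0| ≤ 1 * |x - a - (y - a)| :=
        mul_le_mul hc (abs_max_sub_max_le_abs _ _ _) (abs_nonneg _) zero_le_one
    _ = |x - y| := by rw [one_mul]; ring_nf

lemma convex_hinge (c a : ℝ) (hc : 0 ≤ c) :
    ConvexOn ℝ Set.univ (fun x : ℝ => c * max (x - a) 0) := by
  have h1 : ConvexOn ℝ Set.univ (fun x : ℝ => max (x - a) 0) := by
    apply ConvexOn.sup
    · refine ⟨convex_univ, ?_⟩
      intro x _ y _ p q hp hq hpq
      simp only [smul_eq_mul]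
      have : p * x + q * y - a = p * (x - a) + q * (y - a) := by
        linear_combination a * hpq
      linarith
    · exact convexOn_const 0 convex_univ
  have h2 := h1.smul hc
  simpa [smul_eq_mul] using h2

lemma concave_hinge (c a : ℝ) (hc : c ≤ 0) :
    ConcaveOn ℝ Set.univ (fun x : ℝ => c * max (x - a) 0) := by
  have h := (convex_hinge (-c) a (by linarith)).neg
  have he : (fun x : ℝ => c * max (x - a) 0) = (fun x : ℝ => -(-c * max (x - a) 0)) := by
    funext x; ring
  rw [he]
  exact h

lemma f_zero_of_boundary (M : ℝ) (f : ℝ → ℝ) (hf : LipschitzWith 1 f)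
    (hsupp : ∀ x : ℝ, M < |x| → f x = 0) (x : ℝ) (hx : M ≤ |x|) : f x = 0 := by
  rcases lt_or_eq_of_le hx with h | h
  · exact hsupp x h
  have main : ∀ y : ℝ, M < |y| → |f x| ≤ |x - y| := by
    intro y hy
    have hd := hf.dist_le_mul x y
    simp only [Real.dist_eq, NNReal.coe_one, one_mul, hsupp y hy, sub_zero] at hd
    exact hd
  have key : ∀ ε : ℝ, 0 < ε → |f x| ≤ ε := by
    intro ε hε
    rcases le_or_gt 0 x with hx0 | hx0
    · have hy : M < |x + ε| := by
        rw [abs_of_nonneg (by linarith)]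
        rw [abs_of_nonneg hx0] at h
        linarith
      have := main _ hy
      rw [show x - (x + ε) = -ε by ring, abs_neg, abs_of_pos hε] at this
      exact this
    · have hy : M < |x - ε| := by
        rw [abs_of_nonpos (by linarith)]
        rw [abs_of_neg hx0] at h
        linarith
      have := main _ hy
      rw [show x - (x - ε) = ε by ring, abs_of_pos hε] at this
      exact this
  by_contra hne
  have h0 : 0 < |f x| := abs_pos.mpr hne
  have := key (|f x| / 2) (by linarith)
  linarith
theorem stmt9 (M Δ : ℝ) (hΔ : 0 < Δ) (f : ℝ → ℝ) (hf : LipschitzWith 1 f)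
    (hsupp : ∀ x : ℝ, M < |x| → f x = 0) :
    ∃ (κ : ℕ) (h : Fin κ → ℝ → ℝ),
      κ ≤ 2 * ⌈2 * M / Δ⌉₊ ∧
      (∀ l, LipschitzWith 1 (h l)) ∧
      (∀ l, ConvexOn ℝ Set.univ (h l) ∨ ConcaveOn ℝ Set.univ (h l)) ∧
      ∀ x : ℝ, |f x - ∑ l, h l x| ≤ Δ := by
  rcases le_or_gt M 0 with hM | hM
  · refine ⟨0, Fin.elim0, by simp, fun l => l.elim0, fun l => l.elim0, ?_⟩
    intro x
    have hfx : f x = 0 := f_zero_of_boundary M f hf hsupp x (hM.trans (abs_nonneg x))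
    simp [hfx]
    linarith
  set n := ⌈2 * M / Δ⌉₊ with hn
  have hnpos : 0 < n := Nat.ceil_pos.mpr (by positivity)
  have hnR : (0:ℝ) < (n:ℝ) := by exact_mod_cast hnpos
  set δ := 2 * M / n with hδ
  have hδpos : 0 < δ := by positivity
  have hδΔ : δ ≤ Δ := by
    rw [hδ, div_le_iff₀ hnR]
    have h1 : 2 * M / Δ ≤ (n:ℝ) := Nat.le_ceil _
    calc 2 * M = (2*M/Δ) * Δ := by field_simp
      _ ≤ (n:ℝ) * Δ := mul_le_mul_of_nonneg_right h1 hΔ.le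
      _ = Δ * n := by ring
  set t : ℕ → ℝ := fun j => -M + j * δ with ht
  set v : ℕ → ℝ := fun j => f (t j) with hv
  set s : ℕ → ℝ := fun j => (v (j+1) - v j) / δ with hs
  have tsucc : ∀ j : ℕ, t (j+1) = t j + δ := by
    intro j; simp only [ht]; push_cast; ring
  have tmono : ∀ j k : ℕ, j ≤ k → t j ≤ t k := by
    intro j k hjk
    simp only [ht]
    have hc : (j:ℝ) ≤ (k:ℝ) := by exact_mod_cast hjk
    nlinarith
  have ht0 : t 0 = -M := by simp [ht]
  have hnδ : (n:ℝ) * δ = 2 * M := by rw [hδ]; field_simp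
  have htn : t n = M := by
    show -M + (n:ℝ) * δ = M
    rw [hnδ]; ring
  have hv0 : v 0 = 0 := by
    show f (t 0) = 0
    apply f_zero_of_boundary M f hf hsupp
    rw [ht0, abs_neg, abs_of_pos hM]
  have hvn : v n = 0 := by
    show f (t n) = 0
    apply f_zero_of_boundary M f hf hsupp
    rw [htn, abs_of_pos hM]
  have hvlip : ∀ y z : ℝ, |f y - f z| ≤ |y - z| := by
    intro y z
    have hd := hf.dist_le_mul y z
    simpa [Real.dist_eq] using hd
  have slip : ∀ j : ℕ, |s j| ≤ 1 := by
    intro j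
    show |(v (j+1) - v j) / δ| ≤ 1
    rw [abs_div, abs_of_pos hδpos, div_le_one hδpos]
    calc |v (j+1) - v j| ≤ |t (j+1) - t j| := hvlip _ _
      _ = δ := by rw [tsucc j]; simp [abs_of_pos hδpos]
  have sδ : ∀ j : ℕ, s j * δ = v (j+1) - v j := by
    intro j
    show (v (j+1) - v j) / δ * δ = v (j+1) - v j
    field_simp
  set H : ℕ → ℝ → ℝ :=
    fun l x => if l % 2 = 0 then s (l/2) * max (x - t (l/2)) 0
      else -(s (l/2)) * max (x - t (l/2 + 1)) 0 with hH
  refine ⟨2 * n, fun l => H l.val, le_refl _, ?_, ?_, ?_⟩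
  · intro l
    show LipschitzWith 1 (H l.val)
    rw [hH]
    by_cases hp : l.val % 2 = 0
    · simp only [if_pos hp]
      exact lip_hinge _ _ (slip _)
    · simp only [if_neg hp]
      apply lip_hinge
      rw [abs_neg]; exact slip _
  · intro l
    show ConvexOn ℝ Set.univ (H l.val) ∨ ConcaveOn ℝ Set.univ (H l.val)
    rw [hH]
    by_cases hp : l.val % 2 = 0
    · simp only [if_pos hp]
      rcases le_or_gt 0 (s (l.val/2)) with hc | hc
      · exact Or.inl (convex_hinge _ _ hc)
      · exact Or.inr (concave_hinge _ _ hc.le)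
    · simp only [if_neg hp]
      rcases le_or_gt 0 (-(s (l.val/2))) with hc | hc
      · exact Or.inl (convex_hinge _ _ hc)
      · exact Or.inr (concave_hinge _ _ hc.le)
  · intro x
    have hsum : ∑ l : Fin (2*n), H l.val x
        = ∑ j ∈ Finset.range n, (s j * max (x - t j) 0 - s j * max (x - t (j+1)) 0) := by
      rw [Fin.sum_univ_eq_sum_range (fun l => H l x) (2*n), sum_range_two_mul' n (fun l => H l x)]
      apply Finset.sum_congr rfl
      intro j _
      have e1 : (2*j) % 2 = 0 := by omega
      have e2 : (2*j) / 2 = j := by omega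
      have e3 : ¬ ((2*j+1) % 2 = 0) := by omega
      have e4 : (2*j+1)/2 = j := by omega
      rw [hH]
      simp only [e1, e2, e3, e4, if_true, if_false, if_pos, if_neg, not_false_iff]
      ring
    show |f x - ∑ l : Fin (2*n), H l.val x| ≤ Δ
    rw [hsum]
    rcases le_or_gt x (t 0) with hx0 | hx0
    · have hz : ∀ j ∈ Finset.range n,
          s j * max (x - t j) 0 - s j * max (x - t (j+1)) 0 = 0 := by
        intro j _
        have h1 : x - t j ≤ 0 := by linarith [tmono 0 j (Nat.zero_le j)]
        have h2 : x - t (j+1) ≤ 0 := by linarith [tmono 0 (j+1) (Nat.zero_le _)]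
        rw [max_eq_right h1, max_eq_right h2]
        ring
      rw [Finset.sum_congr rfl hz]
      have hfx : f x = 0 := by
        apply f_zero_of_boundary M f hf hsupp
        rw [ht0] at hx0
        exact le_abs.mpr (Or.inr (by linarith))
      simp [hfx]
      linarith
    rcases le_or_gt (t n) x with hxn | hxn
    · have hz : ∀ j ∈ Finset.range n,
          s j * max (x - t j) 0 - s j * max (x - t (j+1)) 0 = v (j+1) - v j := by
        intro j hj
        rw [Finset.mem_range] at hj
        have h2 : 0 ≤ x - t (j+1) := by linarith [tmono (j+1) n hj]
        have h1 : 0 ≤ x - t j := by linarith [tmono j (j+1) (Nat.le_succ j)]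
        rw [max_eq_left h1, max_eq_left h2, ← sδ j, tsucc j]
        ring
      rw [Finset.sum_congr rfl hz, Finset.sum_range_sub v n, hv0, hvn]
      have hfx : f x = 0 := by
        apply f_zero_of_boundary M f hf hsupp
        rw [htn] at hxn
        exact le_abs.mpr (Or.inl hxn)
      simp [hfx]
      linarith
    -- middle case
    set m := ⌊(x - t 0) / δ⌋₊ with hm
    have hxt0 : 0 ≤ (x - t 0) / δ := div_nonneg (by linarith) hδpos.le
    have hm1 : t m ≤ x := by
      have h1 : (m:ℝ) ≤ (x - t 0) / δ := Nat.floor_le hxt0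
      rw [le_div_iff₀ hδpos] at h1
      have : t m = t 0 + m * δ := by simp only [ht]; push_cast; ring
      linarith
    have hm2 : x < t (m+1) := by
      have h1 : (x - t 0) / δ < m + 1 := Nat.lt_floor_add_one _
      rw [div_lt_iff₀ hδpos] at h1
      have : t (m+1) = t 0 + (m+1) * δ := by simp only [ht]; push_cast; ring
      push_cast at h1 ⊢
      linarith
    have hmn : m < n := by
      have h1 : (x - t 0) / δ < n := by
        rw [div_lt_iff₀ hδpos]
        have : t n = t 0 + n * δ := by simp only [ht]; push_cast; ring
        linarith
      exact_mod_cast (Nat.floor_lt hxt0).mpr h1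
    have hGsub : ∑ j ∈ Finset.range n, (s j * max (x - t j) 0 - s j * max (x - t (j+1)) 0)
        = ∑ j ∈ Finset.range (m+1), (s j * max (x - t j) 0 - s j * max (x - t (j+1)) 0) := by
      symm
      apply Finset.sum_subset (Finset.range_subset_range.mpr (by omega))
      intro j hj hj'
      rw [Finset.mem_range] at hj hj'
      have hjm : m + 1 ≤ j := by omega
      have h1 : x - t j ≤ 0 := by linarith [tmono (m+1) j hjm]
      have h2 : x - t (j+1) ≤ 0 := by linarith [tmono (m+1) (j+1) (by omega)]
      rw [max_eq_right h1, max_eq_right h2]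
      ring
    have hGval : ∑ j ∈ Finset.range (m+1), (s j * max (x - t j) 0 - s j * max (x - t (j+1)) 0)
        = v m + s m * (x - t m) := by
      rw [Finset.sum_range_succ]
      have hinit : ∀ j ∈ Finset.range m,
          s j * max (x - t j) 0 - s j * max (x - t (j+1)) 0 = v (j+1) - v j := by
        intro j hj
        rw [Finset.mem_range] at hj
        have h2 : 0 ≤ x - t (j+1) := by linarith [tmono (j+1) m hj]
        have h1 : 0 ≤ x - t j := by linarith [tmono j (j+1) (Nat.le_succ j)]
        rw [max_eq_left h1, max_eq_left h2, ← sδ j, tsucc j]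
        ring
      rw [Finset.sum_congr rfl hinit, Finset.sum_range_sub v m, hv0]
      rw [max_eq_left (by linarith), max_eq_right (by linarith)]
      ring
    rw [hGsub, hGval]
    have hb1 : |f x - (v m + s m * (x - t m))| ≤ 2 * (x - t m) := by
      have h1 : |f x - v m| ≤ x - t m := by
        have := hvlip x (t m)
        rw [abs_of_nonneg (by linarith : (0:ℝ) ≤ x - t m)] at this
        exact this
      have h2 : |s m * (x - t m)| ≤ x - t m := by
        rw [abs_mul, abs_of_nonneg (by linarith : (0:ℝ) ≤ x - t m)]
        nlinarith [slip m, abs_nonneg (s m)]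
      calc |f x - (v m + s m * (x - t m))| = |(f x - v m) - s m * (x - t m)| := by ring_nf
        _ ≤ |f x - v m| + |s m * (x - t m)| := abs_sub _ _
        _ ≤ 2 * (x - t m) := by linarith
    have hb2 : |f x - (v m + s m * (x - t m))| ≤ 2 * (t (m+1) - x) := by
      have hrw : v m + s m * (x - t m) = v (m+1) + s m * (x - t (m+1)) := by
        rw [tsucc m]
        linear_combination sδ m
      rw [hrw]
      have h1 : |f x - v (m+1)| ≤ t (m+1) - x := by
        have := hvlip x (t (m+1))
        rw [abs_of_nonpos (by linarith : x - t (m+1) ≤ 0)] at this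
        linarith [this]
      have h2 : |s m * (x - t (m+1))| ≤ t (m+1) - x := by
        rw [abs_mul, abs_of_nonpos (by linarith : x - t (m+1) ≤ 0)]
        nlinarith [slip m, abs_nonneg (s m)]
      calc |f x - (v (m+1) + s m * (x - t (m+1)))|
          = |(f x - v (m+1)) - s m * (x - t (m+1))| := by ring_nf
        _ ≤ |f x - v (m+1)| + |s m * (x - t (m+1))| := abs_sub _ _
        _ ≤ 2 * (t (m+1) - x) := by linarith
    have hδm : t (m+1) - t m = δ := by rw [tsucc m]; ring
    linarith
end

section
/- Let $x$ be a random variable with $l(t) := \mathbb{E}[x^2 \mathbf{1}_{\{|x| \le t\}}]$ slowly varying at infinity and $\mathbb{E} x^2 = \infty$. Then $\mathbb{P}(|x| > t) = o(l(t)/t^2)$ as $t \to \infty$, i.e. $t^2 \mathbb{P}(|x| > t)/l(t) \to 0$. -/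
/-! Mass of `|x|` in the shell `s < |x| ≤ s'` contributes at least `s²` times its probability to
`l s' - l s`. Cutting `{t < |x|}` into the dyadic shells `2ᵏ t < |x| ≤ 2ᵏ⁺¹ t` therefore gives
`t² P(t < |x|) ≤ ∑ₖ 4⁻ᵏ (l (2ᵏ⁺¹ t) - l (2ᵏ t))`. Slow variation yields `l (2s) ≤ 2 l s` for large
`s`, so the shells with `k ≥ m` contribute at most `4 l t / 2ᵐ`, while the first `m` shells
contribute at most `l (2ᵐ t) - l t = o(l t)`. -/

open MeasureTheory Filter Topology

section Doubling

variable {l q : ℝ → ℝ}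

lemma eventually_forall_pow_two_mul_le (h : ∀ᶠ s in atTop, l (2 * s) ≤ 2 * l s) :
    ∀ᶠ t in atTop, ∀ k : ℕ, l (2 ^ k * t) ≤ 2 ^ k * l t := by
  obtain ⟨T, hT⟩ := eventually_atTop.1 h
  filter_upwards [eventually_ge_atTop (max T 0)] with t ht k
  induction k with
  | zero => simp
  | succ k ih =>
    have hkt : T ≤ 2 ^ k * t :=
      (le_max_left _ _).trans <| ht.trans <|
        le_mul_of_one_le_left ((le_max_right _ _).trans ht) (one_le_pow₀ one_le_two)
    calc l (2 ^ (k + 1) * t) = l (2 * (2 ^ k * t)) := by ring_nf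
      _ ≤ 2 * l (2 ^ k * t) := hT _ hkt
      _ ≤ 2 ^ (k + 1) * l t := by rw [pow_succ]; linarith

lemma sq_mul_sub_le_sum_dyadic {t : ℝ} (ht : 0 < t)
    (hshell : ∀ s s', 0 ≤ s → s ≤ s' → s ^ 2 * (q s - q s') ≤ l s' - l s) (n : ℕ) :
    t ^ 2 * (q t - q (2 ^ n * t)) ≤
      ∑ k ∈ Finset.range n, (l (2 ^ (k + 1) * t) - l (2 ^ k * t)) / 4 ^ k := by
  have htel : t ^ 2 * (q t - q (2 ^ n * t)) =
      ∑ k ∈ Finset.range n, t ^ 2 * (q (2 ^ k * t) - q (2 ^ (k + 1) * t)) := by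
    rw [← Finset.mul_sum, Finset.sum_range_sub' (fun k => q (2 ^ k * t))]; simp
  rw [htel]
  refine Finset.sum_le_sum fun k _ => ?_
  rw [le_div_iff₀ (by positivity)]
  calc t ^ 2 * (q (2 ^ k * t) - q (2 ^ (k + 1) * t)) * 4 ^ k
      = (2 ^ k * t) ^ 2 * (q (2 ^ k * t) - q (2 ^ (k + 1) * t)) := by
        rw [show (4 : ℝ) ^ k = (2 ^ k) ^ 2 by rw [← pow_mul, mul_comm, pow_mul]; norm_num]
        ring
    _ ≤ _ := hshell _ _ (by positivity)
        (mul_le_mul_of_nonneg_right (pow_le_pow_right₀ one_le_two k.le_succ) ht.le)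

lemma sum_dyadic_le_of_doubling {t : ℝ} (ht : 0 < t) (hlt : 0 ≤ l t) (hmono : Monotone l)
    (hdouble : ∀ k : ℕ, l (2 ^ k * t) ≤ 2 ^ k * l t) (m n : ℕ) :
    ∑ k ∈ Finset.range (m + n), (l (2 ^ (k + 1) * t) - l (2 ^ k * t)) / 4 ^ k ≤
      l (2 ^ m * t) - l t + 4 * l t / 2 ^ m := by
  have hle : ∀ k : ℕ, t ≤ 2 ^ k * t := fun k =>
    le_mul_of_one_le_left ht.le (one_le_pow₀ one_le_two)
  have hincr : ∀ k : ℕ, 0 ≤ l (2 ^ (k + 1) * t) - l (2 ^ k * t) := fun k =>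
    sub_nonneg.2 (hmono (mul_le_mul_of_nonneg_right
      (pow_le_pow_right₀ one_le_two k.le_succ) ht.le))
  have hhead : ∑ k ∈ Finset.range m, (l (2 ^ (k + 1) * t) - l (2 ^ k * t)) / 4 ^ k ≤
      l (2 ^ m * t) - l t :=
    calc _ ≤ ∑ k ∈ Finset.range m, (l (2 ^ (k + 1) * t) - l (2 ^ k * t)) :=
          Finset.sum_le_sum fun k _ => div_le_self (hincr k) (one_le_pow₀ (by norm_num))
      _ = l (2 ^ m * t) - l t := by
          rw [Finset.sum_range_sub (fun k => l (2 ^ k * t))]; simp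
  have hterm : ∀ k : ℕ, (l (2 ^ (k + 1) * t) - l (2 ^ k * t)) / 4 ^ k ≤ 2 * l t / 2 ^ k :=
    fun k => calc
      _ ≤ l (2 ^ (k + 1) * t) / 4 ^ k := by
          gcongr; linarith [hlt.trans (hmono (hle k))]
      _ ≤ 2 ^ (k + 1) * l t / 4 ^ k := by gcongr; exact hdouble (k + 1)
      _ = 2 * l t / 2 ^ k := by
          rw [show (4 : ℝ) ^ k = 2 ^ k * 2 ^ k by rw [← mul_pow]; norm_num, pow_succ]
          field_simp
  have htail : ∑ j ∈ Finset.range n,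
      (l (2 ^ (m + j + 1) * t) - l (2 ^ (m + j) * t)) / 4 ^ (m + j) ≤ 4 * l t / 2 ^ m :=
    calc _ ≤ ∑ j ∈ Finset.range n, 2 * l t / 2 ^ m * (1 / 2) ^ j := by
          refine Finset.sum_le_sum fun j _ => (hterm (m + j)).trans_eq ?_
          rw [pow_add, one_div_pow]; field_simp
      _ ≤ 2 * l t / 2 ^ m * 2 := by
          rw [← Finset.mul_sum]; gcongr; exact sum_geometric_two_le n
      _ = 4 * l t / 2 ^ m := by ring
  rw [Finset.sum_range_add]
  linarith

lemma sq_mul_le_sub_add_of_doubling {t : ℝ} (ht : 0 < t) (hlt : 0 ≤ l t) (hmono : Monotone l)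
    (hq : Tendsto q atTop (𝓝 0))
    (hshell : ∀ s s', 0 ≤ s → s ≤ s' → s ^ 2 * (q s - q s') ≤ l s' - l s)
    (hdouble : ∀ k : ℕ, l (2 ^ k * t) ≤ 2 ^ k * l t) (m : ℕ) :
    t ^ 2 * q t ≤ l (2 ^ m * t) - l t + 4 * l t / 2 ^ m := by
  have hbound : ∀ n, t ^ 2 * q t - t ^ 2 * q (2 ^ (m + n) * t) ≤
      l (2 ^ m * t) - l t + 4 * l t / 2 ^ m := fun n => by
    rw [← mul_sub]
    exact (sq_mul_sub_le_sum_dyadic ht hshell _).trans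
      (sum_dyadic_le_of_doubling ht hlt hmono hdouble m n)
  have hlim : Tendsto (fun n => t ^ 2 * q t - t ^ 2 * q (2 ^ (m + n) * t)) atTop
      (𝓝 (t ^ 2 * q t)) := by
    have h2 : Tendsto (fun n : ℕ => (2 : ℝ) ^ (m + n) * t) atTop atTop :=
      ((tendsto_pow_atTop_atTop_of_one_lt one_lt_two).comp
        (tendsto_atTop_atTop.2 fun k => ⟨k, fun n hn => by omega⟩)).atTop_mul_const ht
    simpa using tendsto_const_nhds.sub ((hq.comp h2).const_mul (t ^ 2))
  exact le_of_tendsto' hlim hbound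

lemma eventually_pos_of_tendsto_div_nhds_one (hl0 : ∀ t, 0 ≤ l t)
    (h : Tendsto (fun t => l (2 * t) / l t) atTop (𝓝 1)) : ∀ᶠ t in atTop, 0 < l t := by
  filter_upwards [h.eventually_const_lt one_pos] with t ht
  -- `l (2 * t) / 0 = 0`, so a positive ratio forces `l t ≠ 0`.
  exact (hl0 t).lt_of_ne' fun h0 => by simp [h0] at ht

theorem tendsto_sq_mul_div_of_slowlyVarying (hl0 : ∀ t, 0 ≤ l t) (hmono : Monotone l)
    (hq0 : ∀ t, 0 ≤ q t) (hq : Tendsto q atTop (𝓝 0))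
    (hshell : ∀ s s', 0 ≤ s → s ≤ s' → s ^ 2 * (q s - q s') ≤ l s' - l s)
    (hsv : ∀ lam > (0 : ℝ), Tendsto (fun t => l (lam * t) / l t) atTop (𝓝 1)) :
    Tendsto (fun t => t ^ 2 * q t / l t) atTop (𝓝 0) := by
  have hpos := eventually_pos_of_tendsto_div_nhds_one hl0 (hsv 2 two_pos)
  have hdouble : ∀ᶠ t in atTop, ∀ k : ℕ, l (2 ^ k * t) ≤ 2 ^ k * l t := by
    refine eventually_forall_pow_two_mul_le ?_
    filter_upwards [hpos, (hsv 2 two_pos).eventually_lt_const one_lt_two] with s hs hlt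
    exact ((div_lt_iff₀ hs).1 hlt).le
  refine tendsto_order.2 ⟨fun a ha => Eventually.of_forall fun t =>
    ha.trans_le (div_nonneg (mul_nonneg (sq_nonneg t) (hq0 t)) (hl0 t)), fun ε hε => ?_⟩
  obtain ⟨m, hm⟩ := pow_unbounded_of_one_lt (8 / ε) one_lt_two
  have hm' : 4 / (2 : ℝ) ^ m < ε / 2 := by
    rw [div_lt_iff₀ (by positivity)]
    rw [div_lt_iff₀ hε] at hm
    linarith
  filter_upwards [hpos, hdouble, eventually_gt_atTop 0,
    (hsv (2 ^ m) (by positivity)).eventually_lt_const (lt_add_of_pos_right 1 (half_pos hε))]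
    with t hlt hdt ht hratio
  calc t ^ 2 * q t / l t ≤ (l (2 ^ m * t) - l t + 4 * l t / 2 ^ m) / l t := by
        gcongr
        exact sq_mul_le_sub_add_of_doubling ht hlt.le hmono hq hshell hdt m
    _ = l (2 ^ m * t) / l t - 1 + 4 / 2 ^ m := by field_simp
    _ < ε := by linarith

end Doubling

section TruncatedSecondMoment

variable {Ω : Type*} [MeasurableSpace Ω] {μ : Measure Ω} {X : Ω → ℝ}

noncomputable def truncSecondMoment (μ : Measure Ω) (X : Ω → ℝ) (t : ℝ) : ℝ :=
  ∫ ω in {ω | |X ω| ≤ t}, X ω ^ 2 ∂μ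

lemma truncSecondMoment_nonneg (t : ℝ) : 0 ≤ truncSecondMoment μ X t :=
  integral_nonneg fun _ => sq_nonneg _

lemma measurableSet_abs_le (hX : Measurable X) (t : ℝ) : MeasurableSet {ω | |X ω| ≤ t} :=
  measurableSet_le hX.abs measurable_const

variable [IsFiniteMeasure μ]

lemma integrableOn_sq_abs_le (hX : Measurable X) (t : ℝ) :
    IntegrableOn (fun ω => X ω ^ 2) {ω | |X ω| ≤ t} μ := by
  refine Integrable.mono' (integrable_const (t ^ 2))
    (hX.pow_const 2).aestronglyMeasurable.restrict ?_
  refine (ae_restrict_iff' (measurableSet_abs_le hX t)).2 (Eventually.of_forall fun ω hω => ?_)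
  rw [Real.norm_eq_abs, abs_of_nonneg (sq_nonneg _), ← sq_abs]
  exact pow_le_pow_left₀ (abs_nonneg _) hω 2

lemma truncSecondMoment_mono (hX : Measurable X) : Monotone (truncSecondMoment μ X) :=
  fun _ t hst => setIntegral_mono_set (integrableOn_sq_abs_le hX t)
    (Eventually.of_forall fun _ => sq_nonneg _)
    (Eventually.of_forall fun _ (h : _ ≤ _) => h.trans hst)

lemma sq_mul_sub_le_truncSecondMoment_sub (hX : Measurable X) {s s' : ℝ} (hs : 0 ≤ s)
    (hss' : s ≤ s') :
    s ^ 2 * (μ.real {ω | s < |X ω|} - μ.real {ω | s' < |X ω|}) ≤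
      truncSecondMoment μ X s' - truncSecondMoment μ X s := by
  have hann : {ω | s < |X ω|} \ {ω | s' < |X ω|} = {ω | |X ω| ≤ s'} \ {ω | |X ω| ≤ s} := by
    ext ω; simp [and_comm]
  have hsub : {ω | s' < |X ω|} ⊆ {ω | s < |X ω|} := fun ω (h : s' < |X ω|) => hss'.trans_lt h
  rw [← measureReal_sdiff hsub (measurableSet_lt measurable_const hX.abs), hann,
    truncSecondMoment, truncSecondMoment,
    ← setIntegral_sdiff (measurableSet_abs_le hX s) (integrableOn_sq_abs_le hX s')
      fun ω (h : _ ≤ _) => h.trans hss']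
  refine setIntegral_ge_of_const_le_real ((measurableSet_abs_le hX s').diff
    (measurableSet_abs_le hX s)) (measure_ne_top _ _) (fun ω hω => ?_)
    ((integrableOn_sq_abs_le hX s').mono_set Set.sdiff_subset)
  rw [← sq_abs (X ω)]
  exact pow_le_pow_left₀ hs (not_le.1 hω.2).le 2

lemma tendsto_measureReal_abs_gt_atTop (hX : Measurable X) :
    Tendsto (fun s => μ.real {ω | s < |X ω|}) atTop (𝓝 0) := by
  have h := tendsto_measure_iInter_atTop (μ := μ) (s := fun s : ℝ => {ω | s < |X ω|})
    (fun s => (measurableSet_lt measurable_const hX.abs).nullMeasurableSet)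
    (fun s s' hss' ω (h : s' < |X ω|) => hss'.trans_lt h) ⟨0, measure_ne_top _ _⟩
  have hempty : (⋂ s : ℝ, {ω | s < |X ω|}) = ∅ :=
    Set.eq_empty_of_forall_notMem fun ω hω => lt_irrefl |X ω| (Set.mem_iInter.1 hω |X ω|)
  rw [hempty, measure_empty] at h
  exact (ENNReal.tendsto_toReal ENNReal.zero_ne_top).comp h

end TruncatedSecondMoment

theorem stmt12_general {Ω : Type*} [MeasurableSpace Ω] (P : Measure Ω) [IsProbabilityMeasure P]
    (x : Ω → ℝ) (hx : Measurable x)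
    (l : ℝ → ℝ)
    (hl : ∀ t : ℝ, l t = ∫ ω, Set.indicator {ω | |x ω| ≤ t} (fun ω => (x ω) ^ 2) ω ∂P)
    (hsv : ∀ lam > (0 : ℝ), Tendsto (fun t => l (lam * t) / l t) atTop (nhds 1)) :
    Tendsto (fun t : ℝ => t ^ 2 * (P {ω | t < |x ω|}).toReal / l t) atTop (nhds 0) := by
  obtain rfl : l = truncSecondMoment P x :=
    funext fun t => by rw [hl t, integral_indicator (measurableSet_abs_le hx t), truncSecondMoment]
  exact tendsto_sq_mul_div_of_slowlyVarying truncSecondMoment_nonneg (truncSecondMoment_mono hx)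
    (fun _ => measureReal_nonneg) (tendsto_measureReal_abs_gt_atTop hx)
    (fun _ _ => sq_mul_sub_le_truncSecondMoment_sub hx) hsv

theorem stmt12 {Ω : Type*} [MeasurableSpace Ω] (P : Measure Ω) [IsProbabilityMeasure P]
    (x : Ω → ℝ) (hx : Measurable x)
    (l : ℝ → ℝ)
    (hl : ∀ t : ℝ, l t = ∫ ω, Set.indicator {ω | |x ω| ≤ t} (fun ω => (x ω) ^ 2) ω ∂P)
    (hsv : ∀ lam > (0 : ℝ), Tendsto (fun t => l (lam * t) / l t) atTop (nhds 1))
    (hinf : ¬ Integrable (fun ω => (x ω) ^ 2) P) :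
    Tendsto (fun t : ℝ => t ^ 2 * (P {ω | t < |x ω|}).toReal / l t) atTop (nhds 0) :=
  stmt12_general P x hx l hl hsv
end
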